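/- arXiv:1701.01979 — 3 statements merged into one kernel-verified Lean document; each statement's English description precedes it below -/
import Mathlib

section
/- Let n ≥ 1 be an integer, let f : ℂ → ℂ be continuous with compact support, and let z ∈ b𝒰ⁿ. Then ∫_{b𝒰ⁿ} f(2i·ρ(w,z)) dβ(w) = (πⁿ/(n−1)!) · ∫_{ℂ₊} f(λ) (Im λ)^{n−1} dm₂(λ), where ℂ₊ := {λ ∈ ℂ : Im λ > 0} and dm₂ is Lebesgue measure on ℂ. -/
/-!
Parametrize `b𝒰ⁿ` by `(ζ, t) ∈ ℂⁿ × ℝ` through `bMap`. For `z ∈ b𝒰ⁿ`, the value `2iρ(w, z)` is the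
last coordinate of the Heisenberg translate of `w` that moves `z` to the origin; in the
parameters this translation is a shear of `ℂⁿ × ℝ`, hence preserves Lebesgue measure, and we are
reduced to `z = 0`, where `2iρ(w, 0) = t + i|ζ|²`. Integrating first in `t` and then in polar
coordinates on `ℂⁿ ≅ ℝ²ⁿ`, with `r = |ζ|²`, produces the density `πⁿ r^{n-1} / (n-1)!` on the
upper half-plane.
-/

open MeasureTheory Real

noncomputable section

/-- The Siegel upper half-space `𝒰ⁿ ⊆ ℂ^{n+1}`:
points `z = (z′, z_{n+1})` with `Im z_{n+1} > |z′|²`. -/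
def Siegel (n : ℕ) : Set (Fin (n + 1) → ℂ) :=
  {z | ∑ j : Fin n, ‖z j.castSucc‖ ^ 2 < (z (Fin.last n)).im}

/-- `ρ(z,w) = (i/2)(conj w_{n+1} - z_{n+1}) - ∑_{j=1}^n z_j conj w_j`. -/
def rhoK (n : ℕ) (z w : Fin (n + 1) → ℂ) : ℂ :=
  Complex.I / 2 * ((starRingEnd ℂ) (w (Fin.last n)) - z (Fin.last n)) -
    ∑ j : Fin n, z j.castSucc * (starRingEnd ℂ) (w j.castSucc)

/-- `ρ(z,z) = Im z_{n+1} - |z′|²`, as a real number. -/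
def rhoSelf (n : ℕ) (z : Fin (n + 1) → ℂ) : ℝ :=
  (z (Fin.last n)).im - ∑ j : Fin n, ‖z j.castSucc‖ ^ 2

/-- The parametrization `(z′, t) ↦ (z′, t + i|z′|²)` of the boundary `b𝒰ⁿ`. -/
def bMap (n : ℕ) : (Fin n → ℂ) × ℝ → (Fin (n + 1) → ℂ) := fun q =>
  Fin.snoc q.1 ((q.2 : ℂ) + Complex.I * ((∑ j : Fin n, ‖q.1 j‖ ^ 2 : ℝ) : ℂ))

/-- The measure `β` on `b𝒰ⁿ`: the pushforward of Lebesgue measure on `ℂⁿ × ℝ`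
under `(z′, t) ↦ (z′, t + i|z′|²)`. -/
def betaM (n : ℕ) : Measure (Fin (n + 1) → ℂ) :=
  Measure.map (bMap n) volume

/-- The point `𝐢 = (0, …, 0, i) ∈ ℂ^{n+1}`. -/
def iotaPt (n : ℕ) : Fin (n + 1) → ℂ := fun j => if j = Fin.last n then Complex.I else 0

/-- The Pochhammer symbol `(x)_k = x (x+1) ⋯ (x+k-1)`. -/
def pochR (x : ℝ) (k : ℕ) : ℝ := ∏ i ∈ Finset.range k, (x + i)

open Set
open scoped Nat

theorem integral_comp_sq_Ioi {E : Type*} [NormedAddCommGroup E] [NormedSpace ℝ E] (g : ℝ → E) :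
    ∫ y in Ioi (0 : ℝ), (2 * y) • g (y ^ 2) = ∫ r in Ioi (0 : ℝ), g r := by
  rw [← integral_comp_rpow_Ioi g two_ne_zero]
  refine setIntegral_congr_fun measurableSet_Ioi fun y _ => ?_
  norm_num [Real.rpow_two]

theorem volume_real_sum_norm_sq_lt_one (n : ℕ) :
    volume.real {ζ : Fin n → ℂ | ∑ j, ‖ζ j‖ ^ 2 < 1} = π ^ n / n ! := by
  have h := Complex.volume_sum_rpow_lt_one (Fin n) (p := 2) one_le_two
  simp only [Real.rpow_two, Fintype.card_fin] at h
  rw [measureReal_def, h, ENNReal.toReal_ofReal (by positivity)]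
  norm_num [Real.Gamma_nat_eq_factorial]

theorem integral_comp_sum_norm_sq {E : Type*} [NormedAddCommGroup E] [NormedSpace ℝ E]
    {n : ℕ} (hn : n ≠ 0) (H : ℝ → E) :
    ∫ ζ : Fin n → ℂ, H (∑ j, ‖ζ j‖ ^ 2) =
      (π ^ n / (n - 1)! : ℝ) • ∫ r in Ioi (0 : ℝ), r ^ (n - 1) • H r := by
  have : Nontrivial (EuclideanSpace ℂ (Fin n)) := by
    have : Nonempty (Fin n) := ⟨⟨0, Nat.pos_of_ne_zero hn⟩⟩
    infer_instance
  set e := MeasurableEquiv.toLp 2 (Fin n → ℂ)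
  have : (volume.map e).IsAddHaarMeasure :=
    (PiLp.continuousLinearEquiv 2 ℝ (fun _ : Fin n => ℂ)).symm.isAddHaarMeasure_map volume
  have hball : (volume.map e).real (Metric.ball 0 1) = π ^ n / n ! := by
    rw [← volume_real_sum_norm_sq_lt_one, measureReal_def, measureReal_def, e.map_apply]
    congr 2
    ext ζ
    simp [e, EuclideanSpace.norm_eq, Real.sqrt_lt' one_pos]
  have hdim : Module.finrank ℝ (EuclideanSpace ℂ (Fin n)) = 2 * n := by
    rw [(PiLp.continuousLinearEquiv 2 ℝ (fun _ : Fin n => ℂ)).toLinearEquiv.finrank_eq,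
      Module.finrank_pi_fintype]
    simp [mul_comm]
  calc ∫ ζ : Fin n → ℂ, H (∑ j, ‖ζ j‖ ^ 2)
      = ∫ x, H (‖x‖ ^ 2) ∂volume.map e := by
        simp only [integral_map_equiv, PiLp.norm_sq_eq_of_L2]; rfl
    _ = (2 * n : ℕ) • (π ^ n / n ! : ℝ) • ∫ y in Ioi (0 : ℝ), y ^ (2 * n - 1) • H (y ^ 2) := by
        rw [integral_fun_norm_addHaar _ (fun y => H (y ^ 2)), hball, hdim]
    _ = (π ^ n / (n - 1)! : ℝ) • ∫ y in Ioi (0 : ℝ), (2 * y) • (y ^ 2) ^ (n - 1) • H (y ^ 2) := by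
        obtain ⟨m, rfl⟩ := Nat.exists_eq_succ_of_ne_zero hn
        have hpt : ∀ y : ℝ,
            (2 * y) • (y ^ 2) ^ m • H (y ^ 2) = (2 : ℝ) • y ^ (2 * m + 1) • H (y ^ 2) := by
          intro y
          rw [smul_smul, smul_smul, ← pow_mul]
          congr 1
          ring
        simp_rw [Nat.succ_sub_one, hpt, integral_smul, smul_smul, ← Nat.cast_smul_eq_nsmul ℝ,
          show 2 * (m + 1) - 1 = 2 * m + 1 by omega]
        rw [smul_smul]
        congr 1
        push_cast [Nat.factorial_succ]
        field_simp
    _ = (π ^ n / (n - 1)! : ℝ) • ∫ r in Ioi (0 : ℝ), r ^ (n - 1) • H r := by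
        rw [integral_comp_sq_Ioi (fun r => r ^ (n - 1) • H r)]

theorem setIntegral_upperHalfPlane {E : Type*} [NormedAddCommGroup E] [NormedSpace ℝ E]
    (g : ℂ → E) (hg : IntegrableOn g {w : ℂ | 0 < w.im}) :
    ∫ w in {w : ℂ | 0 < w.im}, g w = ∫ r in Ioi (0 : ℝ), ∫ t : ℝ, g (t + r * Complex.I) := by
  have hmp := Complex.volume_preserving_equiv_real_prod.symm
  have hemb := Complex.measurableEquivRealProd.symm.measurableEmbedding
  have hpre : Complex.measurableEquivRealProd.symm ⁻¹' {w : ℂ | 0 < w.im} = univ ×ˢ Ioi 0 := by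
    ext p
    simp [Complex.measurableEquivRealProd_symm_apply]
  have hrestrict : (volume : Measure (ℝ × ℝ)).restrict (univ ×ˢ Ioi 0) =
      (volume : Measure ℝ).prod (volume.restrict (Ioi 0)) := by
    rw [Measure.volume_eq_prod, ← Measure.prod_restrict, Measure.restrict_univ]
  rw [← hmp.integrableOn_comp_preimage hemb, hpre, IntegrableOn, hrestrict] at hg
  rw [← hmp.setIntegral_preimage_emb hemb, hpre, hrestrict]
  rw [integral_prod_symm (fun p => g (Complex.measurableEquivRealProd.symm p)) hg]
  simp [Complex.measurableEquivRealProd_symm_apply, Complex.mk_eq_add_mul_I]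

theorem measurePreserving_sub_add_prod {G : Type*} [MeasurableSpace G] [AddGroup G]
    [MeasurableAdd G] (μ : Measure G) [μ.IsAddRightInvariant] [SFinite μ] (w : G) {a : G → ℝ}
    (ha : Measurable a) :
    MeasurePreserving (fun q : G × ℝ => (q.1 - w, q.2 + a q.1)) (μ.prod volume) (μ.prod volume) :=
  (measurePreserving_sub_right μ w).skew_product (by fun_prop)
    (ae_of_all _ fun x => map_add_right_eq_self volume (a x))

theorem continuous_bMap (n : ℕ) : Continuous (bMap n) := by
  unfold bMap
  exact continuous_fst.finSnoc (A := fun _ => ℂ) (by fun_prop)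

@[simp]
theorem bMap_last (n : ℕ) (q : (Fin n → ℂ) × ℝ) :
    bMap n q (Fin.last n) = q.2 + Complex.I * ((∑ j, ‖q.1 j‖ ^ 2 : ℝ) : ℂ) := by
  simp [bMap]

theorem hasCompactSupport_comp_bMap_last (n : ℕ) {M : Type*} [Zero M] {f : ℂ → M} (hf : HasCompactSupport f) :
    HasCompactSupport fun q => f (bMap n q (Fin.last n)) := by
  obtain ⟨R, hR⟩ := hf.isBounded.subset_closedBall 0
  refine .of_support_subset_isCompact (isCompact_closedBall (0 : (Fin n → ℂ) × ℝ) (1 + R)) ?_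
  intro q hq
  have hnorm : ‖bMap n q (Fin.last n)‖ ≤ R := by
    simpa using hR (subset_tsupport _ hq)
  have hre : |q.2| ≤ R := by
    simpa only [bMap_last, Complex.add_re, Complex.ofReal_re, Complex.I_mul_re,
      Complex.ofReal_im, neg_zero, add_zero] using (Complex.abs_re_le_norm _).trans hnorm
  have him : ∑ j, ‖q.1 j‖ ^ 2 ≤ R := by
    simpa only [bMap_last, Complex.add_im, Complex.ofReal_re, Complex.I_mul_im,
      Complex.ofReal_im, zero_add] using (Complex.im_le_norm _).trans hnorm
  have hR0 : 0 ≤ R := (abs_nonneg _).trans hre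
  rw [mem_closedBall_zero_iff, Prod.norm_def, max_le_iff, pi_norm_le_iff_of_nonneg (by positivity)]
  refine ⟨fun j => ?_, by rw [Real.norm_eq_abs]; linarith⟩
  have hj : ‖q.1 j‖ ^ 2 ≤ R :=
    (Finset.single_le_sum (fun i _ => sq_nonneg ‖q.1 i‖) (Finset.mem_univ j)).trans him
  nlinarith [sq_nonneg (‖q.1 j‖ - 1)]

theorem integral_comp_bMap_last {n : ℕ} (hn : n ≠ 0) {f : ℂ → ℂ} (hf : Continuous f)
    (hsupp : HasCompactSupport f) :
    ∫ q, f (bMap n q (Fin.last n)) =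
      ((π ^ n / (n - 1)! : ℝ) : ℂ) *
        ∫ w in {w : ℂ | 0 < w.im}, f w * ((w.im ^ (n - 1) : ℝ) : ℂ) := by
  have hint : Integrable (fun q => f (bMap n q (Fin.last n))) (volume.prod volume) :=
    (hf.comp ((continuous_apply _).comp (continuous_bMap n))).integrable_of_hasCompactSupport
      (hasCompactSupport_comp_bMap_last n hsupp)
  have hint' : IntegrableOn (fun w => f w * ((w.im ^ (n - 1) : ℝ) : ℂ)) {w : ℂ | 0 < w.im} :=
    ((hf.mul (by fun_prop)).integrable_of_hasCompactSupport hsupp.mul_right).integrableOn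
  rw [Measure.volume_eq_prod, integral_prod _ hint]
  simp only [bMap_last]
  rw [integral_comp_sum_norm_sq hn (fun r => ∫ t : ℝ, f (t + Complex.I * r)),
    setIntegral_upperHalfPlane _ hint', ← Complex.real_smul]
  congr 1
  refine setIntegral_congr_fun measurableSet_Ioi fun r _ => ?_
  simp [integral_mul_const, mul_comm]

/-- In the coordinates of `bMap`, the Heisenberg translation of `b𝒰ⁿ` moving `z` to the origin. -/
def heisenbergShift (n : ℕ) (z : Fin (n + 1) → ℂ) (q : (Fin n → ℂ) × ℝ) : (Fin n → ℂ) × ℝ :=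
  (q.1 - fun j => z j.castSucc,
    q.2 + (2 * (∑ j, q.1 j * (starRingEnd ℂ) (z j.castSucc)).im - (z (Fin.last n)).re))

theorem measurePreserving_heisenbergShift (n : ℕ) (z : Fin (n + 1) → ℂ) :
    MeasurePreserving (heisenbergShift n z) volume volume :=
  measurePreserving_sub_add_prod volume _
    (a := fun ζ : Fin n → ℂ =>
      2 * (∑ j : Fin n, ζ j * (starRingEnd ℂ) (z j.castSucc)).im - (z (Fin.last n)).re)
    (by fun_prop)

theorem two_mul_I_mul_rhoK_bMap {n : ℕ} {z : Fin (n + 1) → ℂ}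
    (hz : (z (Fin.last n)).im = ∑ j : Fin n, ‖z j.castSucc‖ ^ 2) (q : (Fin n → ℂ) × ℝ) :
    2 * Complex.I * rhoK n (bMap n q) z = bMap n (heisenbergShift n z q) (Fin.last n) := by
  obtain ⟨ζ, t⟩ := q
  have hdist : ∑ j : Fin n, ‖ζ j - z j.castSucc‖ ^ 2 =
      ∑ j, ‖ζ j‖ ^ 2 + ∑ j : Fin n, ‖z j.castSucc‖ ^ 2 -
        2 * (∑ j : Fin n, ζ j * (starRingEnd ℂ) (z j.castSucc)).re := by
    simp only [Complex.sq_norm, Complex.normSq_sub, Complex.re_sum, Finset.mul_sum,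
      ← Finset.sum_add_distrib, ← Finset.sum_sub_distrib]
  simp only [rhoK, bMap, heisenbergShift, Fin.snoc_last, Fin.snoc_castSucc, Pi.sub_apply, hdist,
    ← hz]
  -- as atoms, these sums are left alone by `push_cast`
  generalize ∑ j, ζ j * (starRingEnd ℂ) (z j.castSucc) = S
  generalize z (Fin.last n) = L
  generalize ∑ j, ‖ζ j‖ ^ 2 = b
  have hL : (starRingEnd ℂ) L = L.re - L.im * Complex.I := Complex.ext (by simp) (by simp)
  push_cast
  rw [hL]
  nth_rewrite 1 [← Complex.re_add_im S]
  linear_combination (L.re - L.im * Complex.I - t - Complex.I * b - 2 * S.im) * Complex.I_sq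

/-- Corollary 3.3: for `n ≥ 1`, continuous compactly supported `f : ℂ → ℂ` and `z ∈ b𝒰ⁿ`,
`∫_{b𝒰ⁿ} f(2i ρ(w,z)) dβ(w) = (πⁿ/(n-1)!) ∫_{ℂ₊} f(λ) (Im λ)^{n-1} dm₂(λ)`. -/
theorem forelli_corollary_one_variable (n : ℕ) (hn : 1 ≤ n)
    (f : ℂ → ℂ) (hf : Continuous f) (hsupp : HasCompactSupport f)
    (z : Fin (n + 1) → ℂ)
    (hz : (z (Fin.last n)).im = ∑ j : Fin n, ‖z j.castSucc‖ ^ 2) :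
    (∫ w, f (2 * Complex.I * rhoK n w z) ∂betaM n) =
      ((π ^ n / (Nat.factorial (n - 1) : ℝ) : ℝ) : ℂ) *
        ∫ lam in {lam : ℂ | 0 < lam.im}, f lam * ((lam.im ^ (n - 1) : ℝ) : ℂ) := by
  have hshift := measurePreserving_heisenbergShift n z
  have hF : Continuous fun q => f (bMap n q (Fin.last n)) :=
    hf.comp ((continuous_apply _).comp (continuous_bMap n))
  have hrho : Continuous fun w => f (2 * Complex.I * rhoK n w z) := by
    unfold rhoK
    fun_prop
  calc ∫ w, f (2 * Complex.I * rhoK n w z) ∂betaM n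
      = ∫ q, f (bMap n (heisenbergShift n z q) (Fin.last n)) := by
        rw [betaM, integral_map (continuous_bMap n).aemeasurable hrho.aestronglyMeasurable]
        simp_rw [two_mul_I_mul_rhoK_bMap hz]
    _ = ∫ q, f (bMap n q (Fin.last n)) := by
        rw [← integral_map hshift.aemeasurable hF.aestronglyMeasurable, hshift.map_eq]
    _ = _ := integral_comp_bMap_last (by omega) hf hsupp
end
end

section
/- Let n ≥ 1 be an integer and let f ∈ L¹(b𝒰ⁿ, β). Then ∫_{b𝒰ⁿ} f dβ = π · ∫_{𝒰^{n−1}} ( (1/(2π)) ∫_0^{2π} f( √(ρ_{n−1}(w)) e^{iθ}, w ) dθ ) dV(w), where for w = (w₁,…,wₙ) ∈ ℂⁿ one sets ρ_{n−1}(w) := Im wₙ − ∑_{j=1}^{n−1} |w_j|², and (ζ, w) denotes the point of ℂ^{n+1} with first coordinate ζ ∈ ℂ and remaining coordinates w. -/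
open MeasureTheory Real

noncomputable section

/-!
Write `z′ = (ζ, u) ∈ ℂ × ℂᵐ`. The boundary point over `(z′, t)` is `(ζ, w)` with
`w = (u, t + i(|ζ|² + |u|²)) ∈ 𝒰ᵐ`, and `ρ(w) = |ζ|²`. In the coordinates `(u, t, y)` with
`w = (u, t + i(y + |u|²))` Lebesgue measure on `𝒰ᵐ` is Lebesgue measure on `ℂᵐ × ℝ × (0, ∞)`
(the change of variables is a shear), and `y = ρ(w)`. Writing `ζ = √y e^{iθ}` turns `dζ` into
`½ dy dθ`, so `β` is the image of `½ dV(w) dθ` under `(w, θ) ↦ (√ρ(w) e^{iθ}, w)`; Fubini then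
gives the formula, the constant being `π / (2π) = ½`.
-/

open Set
open scoped ENNReal

section FinTuple

variable {α β : Type*} {n : ℕ}

@[fun_prop]
theorem Measurable.finCons [MeasurableSpace α] [MeasurableSpace β] {f : β → α}
    {g : β → Fin n → α} (hf : Measurable f) (hg : Measurable g) :
    Measurable fun x => (Fin.cons (f x) (g x) : Fin (n + 1) → α) :=
  measurable_pi_lambda _ fun i => i.cases (by simpa) fun j => by simpa using hg.eval

@[fun_prop]
theorem Measurable.finSnoc [MeasurableSpace α] [MeasurableSpace β] {f : β → Fin n → α}
    {g : β → α} (hf : Measurable f) (hg : Measurable g) :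
    Measurable fun x => (Fin.snoc (f x) (g x) : Fin (n + 1) → α) :=
  measurable_pi_lambda _ fun i => i.lastCases (by simpa) fun j => by simpa using hf.eval

variable [MeasureSpace α] [SigmaFinite (volume : Measure α)]

theorem measurePreserving_finCons :
    MeasurePreserving (fun p : α × (Fin n → α) => (Fin.cons p.1 p.2 : Fin (n + 1) → α)) := by
  convert (volume_preserving_piFinSuccAbove (fun _ : Fin (n + 1) => α) 0).symm using 1
  ext p : 1
  simp [Fin.consEquiv]

theorem measurePreserving_finSnoc :
    MeasurePreserving (fun p : (Fin n → α) × α => (Fin.snoc p.1 p.2 : Fin (n + 1) → α)) := by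
  convert (volume_preserving_piFinSuccAbove (fun _ : Fin (n + 1) => α) (Fin.last n)).symm.comp
    Measure.measurePreserving_swap using 1
  · ext p : 1
    simp [Fin.snocEquiv]
  · exact Measure.volume_eq_prod _ _

end FinTuple

theorem measurePreserving_prodMk_add {α G : Type*} [MeasurableSpace α] [MeasurableSpace G]
    [AddGroup G] [MeasurableAdd₂ G] (μ : Measure α) (ν : Measure G) [SFinite μ] [SFinite ν]
    [ν.IsAddRightInvariant] {g : α → G} (hg : Measurable g) :
    MeasurePreserving (fun p : α × G => (p.1, p.2 + g p.1)) (μ.prod ν) (μ.prod ν) :=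
  (MeasurePreserving.id μ).skew_product (measurable_snd.add (hg.comp measurable_fst))
    (ae_of_all _ fun a => map_add_right_eq_self ν (g a))

theorem Function.Periodic.setIntegral_Ioo_eq_intervalIntegral {E : Type*} [NormedAddCommGroup E]
    [NormedSpace ℝ E] {g : ℝ → E} {T : ℝ} (hg : Function.Periodic g T) (hT : 0 ≤ T) (a b : ℝ) :
    ∫ x in Ioo a (a + T), g x = ∫ x in b..b + T, g x := by
  rw [setIntegral_congr_set Ioo_ae_eq_Ioc, ← intervalIntegral.integral_of_le (by linarith),
    hg.intervalIntegral_add_eq a b]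

theorem lintegral_Ioi_comp_sqrt (G : ℝ → ℝ≥0∞) :
    ∫⁻ y in Ioi 0, G (√y) = 2 * ∫⁻ r in Ioi 0, ENNReal.ofReal r * G r := by
  have hsq : (· ^ 2) '' Ioi (0 : ℝ) = Ioi 0 := by
    ext y
    simp only [mem_image, mem_Ioi]
    exact ⟨fun ⟨r, hr, hy⟩ => hy ▸ pow_pos hr 2,
      fun hy => ⟨√y, sqrt_pos.2 hy, sq_sqrt (le_of_lt hy)⟩⟩
  calc ∫⁻ y in Ioi 0, G (√y) = ∫⁻ y in (· ^ 2) '' Ioi (0 : ℝ), G (√y) := by rw [hsq]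
    _ = ∫⁻ r in Ioi 0, ENNReal.ofReal |2 * r| * G √(r ^ 2) := by
      refine lintegral_image_eq_lintegral_abs_deriv_mul measurableSet_Ioi
        (fun r _ => ?_) ((pow_left_strictMonoOn₀ two_ne_zero).injOn.mono Ioi_subset_Ici_self) _
      simpa using (hasDerivAt_pow 2 r).hasDerivWithinAt
    _ = 2 * ∫⁻ r in Ioi 0, ENNReal.ofReal r * G r := by
      rw [← lintegral_const_mul' _ _ ENNReal.ofNat_ne_top]
      refine setLIntegral_congr_fun measurableSet_Ioi fun r (hr : 0 < r) => ?_
      rw [sqrt_sq hr.le, abs_of_pos (by positivity), ← mul_assoc, ENNReal.ofReal_mul zero_le_two]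
      norm_num

def sqrtPolar (p : ℝ × ℝ) : ℂ := (√p.1 : ℂ) * Complex.exp (p.2 * Complex.I)

@[fun_prop]
theorem measurable_sqrtPolar : Measurable sqrtPolar := by
  unfold sqrtPolar; fun_prop

theorem norm_sqrtPolar_sq {y : ℝ} (hy : 0 ≤ y) (θ : ℝ) : ‖sqrtPolar (y, θ)‖ ^ 2 = y := by
  simp [sqrtPolar, Complex.norm_exp_ofReal_mul_I, hy]

theorem sqrtPolar_eq_polarCoord_symm (p : ℝ × ℝ) :
    sqrtPolar p = Complex.polarCoord.symm (√p.1, p.2) := by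
  rw [Complex.polarCoord_symm_apply, sqrtPolar, Complex.exp_mul_I]
  push_cast
  ring

theorem map_sqrtPolar :
    ((volume.restrict (Ioi 0)).prod (volume.restrict (Ioo (-π) π))).map sqrtPolar =
      (2 : ℝ≥0∞) • volume := by
  refine Measure.ext_of_lintegral _ fun g hg => ?_
  have hpolar := Complex.lintegral_comp_polarCoord_symm g
  rw [polarCoord_target, Measure.volume_eq_prod, ← Measure.prod_restrict,
    lintegral_prod _ (by simp only [Complex.polarCoord_symm_apply]; fun_prop)] at hpolar
  rw [lintegral_map hg measurable_sqrtPolar, lintegral_smul_measure, ← hpolar,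
    lintegral_prod _ (by fun_prop)]
  simp_rw [sqrtPolar_eq_polarCoord_symm, smul_eq_mul,
    lintegral_const_mul' _ _ ENNReal.ofReal_ne_top]
  exact lintegral_Ioi_comp_sqrt fun r => ∫⁻ θ in Ioo (-π) π, g (Complex.polarCoord.symm (r, θ))

def siegelCoords (m : ℕ) (p : ((Fin m → ℂ) × ℝ) × ℝ) : Fin (m + 1) → ℂ :=
  Fin.snoc p.1.1 ((p.1.2 : ℂ) + Complex.I * ((p.2 + ∑ j : Fin m, ‖p.1.1 j‖ ^ 2 : ℝ) : ℂ))

theorem measurePreserving_siegelCoords (m : ℕ) : MeasurePreserving (siegelCoords m) := by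
  have hshear := measurePreserving_prodMk_add volume volume
    (g := fun u : Fin m → ℂ => Complex.I * ((∑ j, ‖u j‖ ^ 2 : ℝ) : ℂ)) (by fun_prop)
  convert measurePreserving_finSnoc.comp (hshear.comp
    (((MeasurePreserving.id volume).prod
      (Complex.volume_preserving_equiv_real_prod.symm _)).comp
        (measurePreserving_prodAssoc volume volume volume))) using 1
  · ext ⟨⟨u, t⟩, y⟩ : 1
    simp only [siegelCoords, Function.comp_apply]
    congr 1
    simp [MeasurableEquiv.prodAssoc, Complex.measurableEquivRealProd, Complex.ext_iff]
  · rfl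

theorem rhoSelf_siegelCoords (m : ℕ) (p : ((Fin m → ℂ) × ℝ) × ℝ) :
    rhoSelf m (siegelCoords m p) = p.2 := by
  simp only [rhoSelf, siegelCoords, Fin.snoc_castSucc, Fin.snoc_last, Complex.add_im,
    Complex.ofReal_im, Complex.mul_im, Complex.I_re, Complex.I_im, Complex.ofReal_re]
  ring

theorem siegel_eq_setOf_rhoSelf_pos (m : ℕ) : Siegel m = {z | 0 < rhoSelf m z} := by
  simp [Siegel, rhoSelf]

theorem measurableSet_siegel (m : ℕ) : MeasurableSet (Siegel m) := by
  rw [siegel_eq_setOf_rhoSelf_pos]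
  exact measurableSet_lt measurable_const (by unfold rhoSelf; fun_prop)

theorem volume_restrict_siegel (m : ℕ) :
    volume.restrict (Siegel m) =
      (volume.prod (volume.restrict (Ioi 0))).map (siegelCoords m) := by
  have h := (measurePreserving_siegelCoords m).restrict_preimage (measurableSet_siegel m)
  have hpre : siegelCoords m ⁻¹' Siegel m = univ ×ˢ Ioi 0 := by
    ext p
    simp [siegel_eq_setOf_rhoSelf_pos, rhoSelf_siegelCoords]
  rw [← h.map_eq, hpre, Measure.volume_eq_prod, ← Measure.prod_restrict, Measure.restrict_univ]

theorem bMap_cons (m : ℕ) (ζ : ℂ) (u : Fin m → ℂ) (t : ℝ) :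
    bMap (m + 1) (Fin.cons ζ u, t) = Fin.cons ζ (siegelCoords m ((u, t), ‖ζ‖ ^ 2)) := by
  simp [bMap, siegelCoords, Fin.cons_snoc_eq_snoc_cons, Fin.sum_univ_succ]

def boundaryLift (m : ℕ) (p : (Fin (m + 1) → ℂ) × ℝ) : Fin (m + 2) → ℂ :=
  Fin.cons (sqrtPolar (rhoSelf m p.1, p.2)) p.1

@[fun_prop]
theorem measurable_boundaryLift (m : ℕ) : Measurable (boundaryLift m) := by
  unfold boundaryLift rhoSelf; fun_prop

theorem periodic_boundaryLift (m : ℕ) (w : Fin (m + 1) → ℂ) :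
    Function.Periodic (fun θ => boundaryLift m (w, θ)) (2 * π) := fun θ => by
  simp only [boundaryLift, sqrtPolar]
  push_cast
  rw [add_mul, Complex.exp_add, Complex.exp_two_pi_mul_I, mul_one]

theorem map_cons_sqrtPolar (m : ℕ) :
    ((volume.prod (volume.restrict (Ioi 0))).prod (volume.restrict (Ioo (-π) π))).map
        (fun p : (((Fin m → ℂ) × ℝ) × ℝ) × ℝ =>
          ((Fin.cons (sqrtPolar (p.1.2, p.2)) p.1.1.1 : Fin (m + 1) → ℂ), p.1.1.2)) =
      (2 : ℝ≥0∞) • volume := by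
  have hcons : MeasurePreserving
      (fun q : ((Fin m → ℂ) × ℝ) × ℂ => ((Fin.cons q.2 q.1.1 : Fin (m + 1) → ℂ), q.1.2)) :=
    (measurePreserving_finCons.prod (MeasurePreserving.id volume)).comp
      (((measurePreserving_prodAssoc volume volume volume).symm MeasurableEquiv.prodAssoc).comp
        Measure.measurePreserving_swap)
  calc _ = (((volume.prod (volume.restrict (Ioi 0))).prod (volume.restrict (Ioo (-π) π))).map
          MeasurableEquiv.prodAssoc |>.map (Prod.map id sqrtPolar)).map
            (fun q : ((Fin m → ℂ) × ℝ) × ℂ => ((Fin.cons q.2 q.1.1 : Fin (m + 1) → ℂ), q.1.2)) := by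
        rw [Measure.map_map (by fun_prop) (by fun_prop),
          Measure.map_map (by fun_prop) MeasurableEquiv.prodAssoc.measurable]
        rfl
    _ = (2 : ℝ≥0∞) • volume := by
      rw [(measurePreserving_prodAssoc _ _ _).map_eq, ← Measure.map_prod_map _ _ measurable_id
        measurable_sqrtPolar, Measure.map_id, map_sqrtPolar, Measure.prod_smul_right,
        Measure.map_smul, ← Measure.volume_eq_prod, hcons.map_eq]

theorem betaM_succ_eq_map_boundaryLift (m : ℕ) :
    betaM (m + 1) = (2 : ℝ≥0∞)⁻¹ •
      ((volume.restrict (Siegel m)).prod (volume.restrict (Ioo (-π) π))).map (boundaryLift m) := by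
  set μ := ((volume : Measure ((Fin m → ℂ) × ℝ)).prod (volume.restrict (Ioi (0 : ℝ)))).prod
    (volume.restrict (Ioo (-π) π))
  set F := fun p : (((Fin m → ℂ) × ℝ) × ℝ) × ℝ =>
    ((Fin.cons (sqrtPolar (p.1.2, p.2)) p.1.1.1 : Fin (m + 1) → ℂ), p.1.1.2)
  have hvol : (volume : Measure ((Fin (m + 1) → ℂ) × ℝ)) = (2 : ℝ≥0∞)⁻¹ • μ.map F := by
    rw [map_cons_sqrtPolar, smul_smul, ENNReal.inv_mul_cancel two_ne_zero ENNReal.ofNat_ne_top,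
      one_smul]
  have hpos : ∀ᵐ p ∂μ, 0 < p.1.2 :=
    Measure.quasiMeasurePreserving_fst.ae
      (Measure.quasiMeasurePreserving_snd.ae (ae_restrict_mem measurableSet_Ioi))
  have hae : bMap (m + 1) ∘ F =ᵐ[μ] boundaryLift m ∘ Prod.map (siegelCoords m) id := by
    filter_upwards [hpos] with ⟨⟨⟨u, t⟩, y⟩, θ⟩ hy
    simp [F, bMap_cons, boundaryLift, rhoSelf_siegelCoords, norm_sqrtPolar_sq hy.le θ]
  rw [betaM, hvol, Measure.map_smul, Measure.map_map (by unfold bMap; fun_prop) (by fun_prop),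
    Measure.map_congr hae, ← Measure.map_map (measurable_boundaryLift m)
      ((measurePreserving_siegelCoords m).measurable.prodMap measurable_id),
    ← Measure.map_prod_map _ _ (measurePreserving_siegelCoords m).measurable measurable_id,
    ← volume_restrict_siegel, Measure.map_id]

/-- Corollary 3.4, case `k = n-1`: for `n = m+1 ≥ 1` and `f ∈ L¹(b𝒰ⁿ, β)`,
`∫_{b𝒰ⁿ} f dβ = π ∫_{𝒰^{n-1}} (1/(2π)) ∫_0^{2π} f(√(ρ_{n-1}(w)) e^{iθ}, w) dθ dV(w)`. -/
theorem forelli_polar_decomposition (m : ℕ)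
    (f : (Fin (m + 2) → ℂ) → ℂ) (hf : Integrable f (betaM (m + 1))) :
    (∫ z, f z ∂betaM (m + 1)) =
      (π : ℂ) *
        ∫ w in Siegel m,
          ((1 / (2 * π) : ℝ) : ℂ) *
            ∫ θ in (0 : ℝ)..(2 * π),
              f (Fin.cons (((Real.sqrt (rhoSelf m w) : ℝ) : ℂ) *
                Complex.exp ((θ : ℂ) * Complex.I)) w) := by
  rw [betaM_succ_eq_map_boundaryLift] at hf ⊢
  have hf_map := (integrable_smul_measure (by norm_num) (by norm_num)).mp hf
  have hf_comp := (integrable_map_measure hf_map.aestronglyMeasurable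
    (measurable_boundaryLift m).aemeasurable).mp hf_map
  have hcircle (w : Fin (m + 1) → ℂ) : ∫ θ in Ioo (-π) π, f (boundaryLift m (w, θ)) =
      ∫ θ in (0 : ℝ)..(2 * π),
        f (Fin.cons (((√(rhoSelf m w) : ℝ) : ℂ) * Complex.exp ((θ : ℂ) * Complex.I)) w) := by
    have := ((periodic_boundaryLift m w).comp f).setIntegral_Ioo_eq_intervalIntegral
      two_pi_pos.le (-π) 0
    rwa [show -π + 2 * π = π by ring, zero_add] at this
  rw [integral_smul_measure, integral_map (measurable_boundaryLift m).aemeasurable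
    hf_map.aestronglyMeasurable, integral_prod (fun p => f (boundaryLift m p)) hf_comp]
  simp_rw [hcircle, integral_const_mul, ← mul_assoc]
  rw [Complex.real_smul]
  congr 1
  simp
end
end

section
/- Let n ≥ 1 be an integer and 0 < p < ∞. Let g : 𝒰^{n−1} → ℂ be holomorphic with ∫_{𝒰^{n−1}} |g|^p dV < ∞, and define G on 𝒰ⁿ by G(z₁, z̃) := g(z̃) for z = (z₁, z̃) ∈ ℂ × ℂⁿ with z ∈ 𝒰ⁿ. Then G is holomorphic on 𝒰ⁿ and for every t > 0, ∫_{b𝒰ⁿ} |G(z + t𝐢)|^p dβ(z) = π · ∫_{{w ∈ 𝒰^{n−1} : ρ_{n−1}(w) > t}} |g(w)|^p dV(w) ≤ π · ∫_{𝒰^{n−1}} |g|^p dV; consequently sup_{t>0} ∫_{b𝒰ⁿ} |G(z + t𝐢)|^p dβ(z) ≤ π · ∫_{𝒰^{n−1}} |g|^p dV, i.e. G ∈ H^p(𝒰ⁿ) with ‖G‖_{H^p}^p ≤ π ‖g‖_{A^p(𝒰^{n−1})}^p. -/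
open MeasureTheory Real

noncomputable section

/-!
A shifted boundary point is `bMap (n + 1) (z', s) + t • 𝐢 = (z', s + i (|z'|² + t))`, and `G`
discards its first coordinate `a = z'₀`. The integrand therefore depends on `a` only through
`u = |a|²`, and the image of Lebesgue measure on `ℂ` under `a ↦ |a|²` is `π` times Lebesgue measure
on `(0, ∞)`. For fixed remaining coordinates `w'`, the last coordinate `s + i (u + |w'|² + t)` then
sweeps the half-plane `Im > |w'|² + t` exactly once, which is the slice of the region `ρ > t`.
Since these regions lie in `𝒰^{n-1}`, the bound on the supremum follows.
-/

open Set
open scoped ENNReal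

@[fun_prop]
theorem Measurable.fin_snoc {α β : Type*} [MeasurableSpace α] [MeasurableSpace β] {n : ℕ}
    {f : β → Fin n → α} {g : β → α} (hf : Measurable f) (hg : Measurable g) :
    Measurable fun x => (Fin.snoc (f x) (g x) : Fin (n + 1) → α) := by
  convert (MeasurableEquiv.piFinSuccAbove (fun _ => α) (Fin.last n)).symm.measurable.comp
    (hg.prodMk hf) using 1
  ext x : 1
  simp [MeasurableEquiv.piFinSuccAbove_symm_apply, Fin.insertNthEquiv, Fin.insertNth_last']

theorem Fin.tail_snoc {α : Type*} {n : ℕ} (v : Fin (n + 1) → α) (c : α) :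
    Fin.tail (Fin.snoc v c : Fin (n + 2) → α) = Fin.snoc (Fin.tail v) c := by
  conv_lhs => rw [← Fin.cons_self_tail v, ← Fin.cons_snoc_eq_snoc_cons, Fin.tail_cons]

theorem ContinuousOn.measurable_indicator {α β : Type*} [TopologicalSpace α] [MeasurableSpace α]
    [OpensMeasurableSpace α] [TopologicalSpace β] [MeasurableSpace β] [BorelSpace β] [Zero β]
    {f : α → β} {s : Set α} (hf : ContinuousOn f s) (hs : MeasurableSet s) :
    Measurable (s.indicator f) := by
  classical
  rw [← Set.piecewise_eq_indicator]
  exact hf.measurable_piecewise continuousOn_const hs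

section FinTuple

variable {α : Type*} [MeasureSpace α] [SigmaFinite (volume : Measure α)] {n : ℕ}

theorem lintegral_fin_cons {f : (Fin (n + 1) → α) → ℝ≥0∞} (hf : Measurable f) :
    ∫⁻ x, f x = ∫⁻ w : Fin n → α, ∫⁻ a, f (Fin.cons a w) := by
  rw [(volume_preserving_piFinSuccAbove (fun _ => α) 0).symm.lintegral_map_equiv,
    Measure.volume_eq_prod, lintegral_prod_symm']
  · simp [MeasurableEquiv.piFinSuccAbove_symm_apply, Fin.insertNthEquiv, Fin.insertNth_zero']
  · exact hf.comp (MeasurableEquiv.measurable _)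

theorem lintegral_fin_snoc {f : (Fin (n + 1) → α) → ℝ≥0∞} (hf : Measurable f) :
    ∫⁻ x, f x = ∫⁻ w : Fin n → α, ∫⁻ a, f (Fin.snoc w a) := by
  rw [(volume_preserving_piFinSuccAbove (fun _ => α) (Fin.last n)).symm.lintegral_map_equiv,
    Measure.volume_eq_prod, lintegral_prod_symm']
  · simp [MeasurableEquiv.piFinSuccAbove_symm_apply, Fin.insertNthEquiv, Fin.insertNth_last']
  · exact hf.comp (MeasurableEquiv.measurable _)

end FinTuple

theorem MeasureTheory.Measure.ext_of_Iic' {α : Type*} [TopologicalSpace α]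
    {m : MeasurableSpace α} [SecondCountableTopology α] [LinearOrder α] [OrderTopology α]
    [BorelSpace α] [NoMinOrder α] (μ ν : Measure α) (hμ : ∀ a, μ (Iic a) ≠ ∞)
    (h : ∀ a, μ (Iic a) = ν (Iic a)) : μ = ν := by
  refine ext_of_Ioc' μ ν
    (fun a b _ => ne_top_of_le_ne_top (hμ b) (measure_mono Ioc_subset_Iic_self)) fun a b hab => ?_
  rw [← Iic_sdiff_Iic, measure_sdiff (Iic_subset_Iic.2 hab.le) nullMeasurableSet_Iic (hμ a),
    measure_sdiff (Iic_subset_Iic.2 hab.le) nullMeasurableSet_Iic (h a ▸ hμ a), h, h]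

theorem setLIntegral_Ioi_comp_add_right (f : ℝ → ℝ≥0∞) (r : ℝ) :
    ∫⁻ u in Ioi 0, f (u + r) = ∫⁻ y in Ioi r, f y := by
  have := (measurePreserving_add_right volume r).setLIntegral_comp_preimage_emb
    (measurableEmbedding_addRight r) f (Ioi r)
  rwa [preimage_add_const_Ioi, sub_self] at this

namespace Complex

theorem volume_setOf_norm_sq_le (a : ℝ) :
    volume {z : ℂ | ‖z‖ ^ 2 ≤ a} = ENNReal.ofReal π * ENNReal.ofReal a := by
  rcases lt_or_ge a 0 with ha | ha
  · have : {z : ℂ | ‖z‖ ^ 2 ≤ a} = ∅ :=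
      eq_empty_of_forall_notMem fun z (hz : ‖z‖ ^ 2 ≤ a) => (hz.trans_lt ha).not_ge (sq_nonneg _)
    simp [this, ENNReal.ofReal_of_nonpos ha.le]
  · have : {z : ℂ | ‖z‖ ^ 2 ≤ a} = Metric.closedBall 0 √a := by
      ext z
      simp [Real.le_sqrt (norm_nonneg z) ha]
    rw [this, volume_closedBall, ← ENNReal.ofReal_pow (Real.sqrt_nonneg a), Real.sq_sqrt ha,
      mul_comm, ← ENNReal.ofReal_coe_nnreal, NNReal.coe_real_pi]

theorem map_norm_sq_volume :
    volume.map (fun z : ℂ => ‖z‖ ^ 2) = ENNReal.ofReal π • volume.restrict (Ioi (0 : ℝ)) := by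
  have hIic (a : ℝ) :
      volume.map (fun z : ℂ => ‖z‖ ^ 2) (Iic a) = ENNReal.ofReal π * ENNReal.ofReal a := by
    rw [Measure.map_apply (by fun_prop) measurableSet_Iic]
    exact volume_setOf_norm_sq_le a
  refine Measure.ext_of_Iic' _ _ (fun a => by simp [hIic, ENNReal.mul_ne_top]) fun a => ?_
  rw [hIic, Measure.smul_apply, Measure.restrict_apply measurableSet_Iic, Iic_inter_Ioi,
    Real.volume_Ioc, sub_zero, smul_eq_mul]

theorem lintegral_comp_norm_sq {f : ℝ → ℝ≥0∞} (hf : Measurable f) :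
    ∫⁻ z : ℂ, f (‖z‖ ^ 2) = ENNReal.ofReal π * ∫⁻ u in Ioi 0, f u := by
  rw [← lintegral_map hf (by fun_prop), map_norm_sq_volume, lintegral_smul_measure, smul_eq_mul]

theorem lintegral_eq_lintegral_re_im {f : ℂ → ℝ≥0∞} (hf : Measurable f) :
    ∫⁻ z, f z = ∫⁻ x : ℝ, ∫⁻ y : ℝ, f (x + y * I) := by
  rw [← volume_preserving_equiv_real_prod.symm.lintegral_comp hf, Measure.volume_eq_prod,
    lintegral_prod]
  · simp [measurableEquivRealProd_symm_apply, mk_eq_add_mul_I]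
  · exact (hf.comp (MeasurableEquiv.measurable _)).aemeasurable

theorem setLIntegral_im_gt {f : ℂ → ℝ≥0∞} (hf : Measurable f) (r : ℝ) :
    ∫⁻ z in {z : ℂ | r < z.im}, f z =
      ∫⁻ x : ℝ, ∫⁻ u in Ioi (0 : ℝ), f (x + ((u + r : ℝ) : ℂ) * I) := by
  have hs : MeasurableSet {z : ℂ | r < z.im} := measurableSet_lt measurable_const (by fun_prop)
  rw [← lintegral_indicator hs, lintegral_eq_lintegral_re_im (hf.indicator hs)]
  refine lintegral_congr fun x => ?_
  rw [setLIntegral_Ioi_comp_add_right (fun y : ℝ => f (x + y * I)),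
    ← lintegral_indicator measurableSet_Ioi]
  congr 1 with y
  simp [Set.indicator_apply]

theorem lintegral_lintegral_norm_sq_add {f : ℂ → ℝ≥0∞} (hf : Measurable f) (r : ℝ) :
    ∫⁻ a : ℂ, ∫⁻ x : ℝ, f (x + ((‖a‖ ^ 2 + r : ℝ) : ℂ) * I) =
      ENNReal.ofReal π * ∫⁻ z in {z : ℂ | r < z.im}, f z := by
  have hmeas : Measurable (Function.uncurry fun (x u : ℝ) => f (x + ((u + r : ℝ) : ℂ) * I)) := by
    unfold Function.uncurry
    fun_prop
  rw [setLIntegral_im_gt hf, lintegral_lintegral_swap hmeas.aemeasurable]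
  exact lintegral_comp_norm_sq (hmeas.lintegral_prod_left' (μ := volume))

end Complex

section Siegel

variable {n : ℕ}

theorem isOpen_Siegel (n : ℕ) : IsOpen (Siegel n) :=
  isOpen_lt (by fun_prop) (by fun_prop)

theorem mem_Siegel_iff_rhoSelf_pos {z : Fin (n + 1) → ℂ} : z ∈ Siegel n ↔ 0 < rhoSelf n z := by
  simp [Siegel, rhoSelf]

theorem measurable_rhoSelf : Measurable (rhoSelf n) := by
  unfold rhoSelf
  fun_prop

theorem rhoSelf_snoc (w : Fin n → ℂ) (c : ℂ) :
    rhoSelf n (Fin.snoc w c) = c.im - ∑ j, ‖w j‖ ^ 2 := by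
  simp [rhoSelf]

theorem rhoSelf_succ (z : Fin (n + 2) → ℂ) :
    rhoSelf (n + 1) z = rhoSelf n (Fin.tail z) - ‖z 0‖ ^ 2 := by
  simp only [rhoSelf, Fin.sum_univ_succ, Fin.tail, Fin.succ_last, Fin.succ_castSucc,
    Fin.castSucc_zero]
  ring

theorem tail_mem_Siegel {z : Fin (n + 2) → ℂ} (hz : z ∈ Siegel (n + 1)) :
    Fin.tail z ∈ Siegel n := by
  rw [mem_Siegel_iff_rhoSelf_pos] at hz ⊢
  linarith [rhoSelf_succ z, sq_nonneg ‖z 0‖]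

theorem bMap_add_smul_iotaPt (q : (Fin n → ℂ) × ℝ) (t : ℝ) :
    bMap n q + t • iotaPt n =
      Fin.snoc q.1 (q.2 + ((∑ j, ‖q.1 j‖ ^ 2 + t : ℝ) : ℂ) * Complex.I) := by
  ext j
  induction j using Fin.lastCases with
  | last =>
    simp only [bMap, iotaPt, Pi.add_apply, Pi.smul_apply, Fin.snoc_last, ↓reduceIte,
      Complex.real_smul]
    push_cast
    ring
  | cast j => simp [bMap, iotaPt, (Fin.castSucc_lt_last j).ne]

theorem rhoSelf_bMap_add_smul_iotaPt (q : (Fin n → ℂ) × ℝ) (t : ℝ) :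
    rhoSelf n (bMap n q + t • iotaPt n) = t := by
  rw [bMap_add_smul_iotaPt, rhoSelf_snoc, Complex.add_im, Complex.ofReal_im, Complex.mul_I_im,
    Complex.ofReal_re]
  ring

theorem measurableEmbedding_bMap (n : ℕ) : MeasurableEmbedding (bMap n) := by
  refine Measurable.measurableEmbedding (by unfold bMap; fun_prop) fun q q' h => ?_
  have h₁ : q.1 = q'.1 := by simpa [bMap] using congrArg Fin.init h
  have h₂ : q.2 = q'.2 := by simpa [bMap, h₁] using congrArg (fun z => (z (Fin.last n)).re) h
  exact Prod.ext h₁ h₂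

theorem lintegral_tail_bMap_add_smul_iotaPt {F : (Fin (n + 1) → ℂ) → ℝ≥0∞} (hF : Measurable F)
    (t : ℝ) :
    ∫⁻ q, F (Fin.tail (bMap (n + 1) q + t • iotaPt (n + 1))) =
      ENNReal.ofReal π * ∫⁻ w in {w | t < rhoSelf n w}, F w := by
  have hmeas : Measurable fun q : (Fin (n + 1) → ℂ) × ℝ =>
      F (Fin.snoc (Fin.tail q.1) (q.2 + ((∑ j, ‖q.1 j‖ ^ 2 + t : ℝ) : ℂ) * Complex.I)) := by
    fun_prop
  have hT : MeasurableSet {w | t < rhoSelf n w} :=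
    measurableSet_lt measurable_const measurable_rhoSelf
  simp_rw [bMap_add_smul_iotaPt, Fin.tail_snoc]
  rw [Measure.volume_eq_prod, lintegral_prod _ hmeas.aemeasurable,
    lintegral_fin_cons hmeas.lintegral_prod_right']
  simp only [Fin.tail_cons, Fin.sum_univ_succ, Fin.cons_zero, Fin.cons_succ, add_assoc]
  calc _ = ∫⁻ w : Fin n → ℂ, ENNReal.ofReal π *
        ∫⁻ c in {c : ℂ | ∑ j, ‖w j‖ ^ 2 + t < c.im}, F (Fin.snoc w c) :=
        lintegral_congr fun w => Complex.lintegral_lintegral_norm_sq_add (by fun_prop) _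
    _ = _ := by
      rw [lintegral_const_mul' _ _ ENNReal.ofReal_ne_top, ← lintegral_indicator hT,
        lintegral_fin_snoc (hF.indicator hT)]
      congr 1
      refine lintegral_congr fun w => ?_
      rw [← lintegral_indicator (measurableSet_lt measurable_const Complex.measurable_im)]
      congr 1 with c
      simp [Set.indicator_apply, rhoSelf_snoc, lt_sub_iff_add_lt']

theorem lintegral_betaM_tail_add_smul_iotaPt {g : (Fin (n + 1) → ℂ) → ℂ}
    (hg : ContinuousOn g (Siegel n)) (p : ℝ) {t : ℝ} (ht : 0 < t) :
    ∫⁻ z, ENNReal.ofReal (‖g (Fin.tail (z + t • iotaPt (n + 1)))‖ ^ p) ∂betaM (n + 1) =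
      ENNReal.ofReal π *
        ∫⁻ w in {w | w ∈ Siegel n ∧ t < rhoSelf n w}, ENNReal.ofReal (‖g w‖ ^ p) := by
  -- `g` need not be measurable: only its values on `Siegel n` enter
  set F : (Fin (n + 1) → ℂ) → ℝ≥0∞ := fun w => ENNReal.ofReal (‖(Siegel n).indicator g w‖ ^ p)
  have hF : Measurable F := by
    have := hg.measurable_indicator (isOpen_Siegel n).measurableSet
    fun_prop
  have hSiegel {w} (hw : t < rhoSelf n w) : w ∈ Siegel n :=
    mem_Siegel_iff_rhoSelf_pos.2 (ht.trans hw)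
  have hshift (q) : bMap (n + 1) q + t • iotaPt (n + 1) ∈ Siegel (n + 1) := by
    rw [mem_Siegel_iff_rhoSelf_pos, rhoSelf_bMap_add_smul_iotaPt]
    exact ht
  have hT : {w | w ∈ Siegel n ∧ t < rhoSelf n w} = {w | t < rhoSelf n w} :=
    Set.ext fun w => ⟨And.right, fun hw => ⟨hSiegel hw, hw⟩⟩
  calc _ = ∫⁻ q, F (Fin.tail (bMap (n + 1) q + t • iotaPt (n + 1))) := by
        rw [betaM, (measurableEmbedding_bMap _).lintegral_map]
        exact lintegral_congr fun q => by
          simp only [F, Set.indicator_of_mem (tail_mem_Siegel (hshift q))]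
    _ = _ := by
        rw [lintegral_tail_bMap_add_smul_iotaPt hF, hT]
        congr 1
        refine setLIntegral_congr_fun (measurableSet_lt measurable_const measurable_rhoSelf)
          fun w hw => ?_
        simp only [F, Set.indicator_of_mem (hSiegel hw)]

end Siegel

theorem extension_estimate_general (m : ℕ) (p : ℝ)
    (g : (Fin (m + 1) → ℂ) → ℂ) (hg : DifferentiableOn ℂ g (Siegel m))
    (G : (Fin (m + 2) → ℂ) → ℂ)
    (hG : G = fun z => g fun j : Fin (m + 1) => z j.succ) :
    DifferentiableOn ℂ G (Siegel (m + 1)) ∧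
    (∀ t : ℝ, 0 < t →
      (∫⁻ z, ENNReal.ofReal (‖G (z + t • iotaPt (m + 1))‖ ^ p) ∂betaM (m + 1)) =
        ENNReal.ofReal π *
          ∫⁻ w in {w | w ∈ Siegel m ∧ t < rhoSelf m w},
            ENNReal.ofReal (‖g w‖ ^ p)) ∧
    (⨆ t ∈ Set.Ioi (0 : ℝ),
        ∫⁻ z, ENNReal.ofReal (‖G (z + t • iotaPt (m + 1))‖ ^ p) ∂betaM (m + 1)) ≤
      ENNReal.ofReal π * ∫⁻ w in Siegel m, ENNReal.ofReal (‖g w‖ ^ p) := by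
  obtain rfl : G = fun z => g (Fin.tail z) := hG
  beta_reduce
  have hslice (t : ℝ) (ht : 0 < t) := lintegral_betaM_tail_add_smul_iotaPt hg.continuousOn p ht
  refine ⟨hg.comp (differentiable_pi.2 fun j => differentiable_apply j.succ).differentiableOn
    fun z => tail_mem_Siegel, hslice, iSup₂_le fun t ht => ?_⟩
  rw [hslice t ht]
  gcongr
  exact fun w hw => hw.1

/-- Lemma 6.2 (extension): for `n = m+1 ≥ 1`, `0 < p < ∞` and `g ∈ A^p(𝒰^{n-1})`, the
extension `G(z₁, z̃) = g(z̃)` is holomorphic on `𝒰ⁿ` and for every `t > 0`,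
`∫_{b𝒰ⁿ} |G(z+t𝐢)|^p dβ(z) = π ∫_{ρ_{n-1} > t} |g|^p dV ≤ π ∫_{𝒰^{n-1}} |g|^p dV`;
consequently `G ∈ H^p(𝒰ⁿ)` with `‖G‖_{H^p}^p ≤ π ‖g‖_{A^p}^p`. -/
theorem extension_estimate (m : ℕ) (p : ℝ) (hp : 0 < p)
    (g : (Fin (m + 1) → ℂ) → ℂ) (hg : DifferentiableOn ℂ g (Siegel m))
    (hgint : (∫⁻ w in Siegel m, ENNReal.ofReal (‖g w‖ ^ p)) < ⊤)
    (G : (Fin (m + 2) → ℂ) → ℂ)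
    (hG : G = fun z => g fun j : Fin (m + 1) => z j.succ) :
    DifferentiableOn ℂ G (Siegel (m + 1)) ∧
    (∀ t : ℝ, 0 < t →
      (∫⁻ z, ENNReal.ofReal (‖G (z + t • iotaPt (m + 1))‖ ^ p) ∂betaM (m + 1)) =
        ENNReal.ofReal π *
          ∫⁻ w in {w | w ∈ Siegel m ∧ t < rhoSelf m w},
            ENNReal.ofReal (‖g w‖ ^ p)) ∧
    (⨆ t ∈ Set.Ioi (0 : ℝ),
        ∫⁻ z, ENNReal.ofReal (‖G (z + t • iotaPt (m + 1))‖ ^ p) ∂betaM (m + 1)) ≤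
      ENNReal.ofReal π * ∫⁻ w in Siegel m, ENNReal.ofReal (‖g w‖ ^ p) :=
  extension_estimate_general m p g hg G hG
end
end
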